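/- arXiv:1512.03975 — 3 statements merged into one kernel-verified Lean document; each statement's English description precedes it below -/
import Mathlib

section
/- Let N be a nilpotent endomorphism of a finite-dimensional vector space V over a field of characteristic zero. Then there exists a unique increasing filtration W(N)_• of V, with W(N)_{-m-1} = 0 and W(N)_m = V for some m, such that N·W(N)_n ⊆ W(N)_{n-2} for all n, and for each k ≥ 0 the map induced by N^k from the graded quotient Gr^{W(N)}_k V to Gr^{W(N)}_{-k} V is an isomorphism. -/
/-!
Uniqueness: for `k ≥ 0` the axioms force `W (-k) = N ^ k (W k)` and
`W k = (N ^ (k + 1))⁻¹ (W (-k - 2))`, so `W k` is determined by `W (k + 2)`; descending induction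
from `W m = ⊤` then determines `W` on `k ≥ 0`, hence everywhere.

Existence: through `X ↦ N`, `V` is a finitely generated torsion `F[X]`-module killed by a power
of `X`, hence a finite product of Jordan blocks `F[X] ⧸ (X ^ e)`. On a block, `N ^ j` of a
generator has weight `e - 1 - 2 j`, i.e. `W n = range (N ^ ⌊(e - n) / 2⌋)`, and weight
filtrations are compatible with products and with transport along isomorphisms commuting
with `N`.
-/

/-- The defining properties of the weight filtration `W` of a nilpotent endomorphism `N`
of a finite-dimensional vector space `V`:
* `W` is an increasing filtration by subspaces, with `W (-(m+1)) = ⊥` and `W m = ⊤`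
  for some `m`;
* `N (W n) ⊆ W (n - 2)` for all `n`;
* for each `k ≥ 0`, the map induced by `N ^ k` from `Gr_k V = W k / W (k-1)` to
  `Gr_{-k} V = W (-k) / W (-k-1)` is an isomorphism (expressed elementarily: `N ^ k`
  maps `W k` into `W (-k)`, the induced map is surjective onto the graded quotient,
  and its kernel on the graded quotient is trivial). -/
def IsWeightFiltration {F V : Type*} [Field F] [AddCommGroup V] [Module F V]
    (N : V →ₗ[F] V) (W : ℤ → Submodule F V) : Prop :=
  Monotone W ∧
  (∃ m : ℤ, W (-(m + 1)) = ⊥ ∧ W m = ⊤) ∧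
  (∀ n : ℤ, ∀ x ∈ W n, N x ∈ W (n - 2)) ∧
  (∀ k : ℤ, 0 ≤ k →
    (∀ x ∈ W k, (N ^ k.toNat) x ∈ W (-k)) ∧
    (∀ y ∈ W (-k), ∃ x ∈ W k, (N ^ k.toNat) x - y ∈ W (-k - 1)) ∧
    (∀ x ∈ W k, (N ^ k.toNat) x ∈ W (-k - 1) → x ∈ W (k - 1)))

theorem LinearMap.range_pow_le_range_pow {R M : Type*} [Semiring R] [AddCommMonoid M] [Module R M]
    (f : M →ₗ[R] M) {a b : ℕ} (h : b ≤ a) : range (f ^ a) ≤ range (f ^ b) :=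
  (LinearMap.iterateRange f).monotone h

theorem LinearMap.piMap_pow {R ι : Type*} [Semiring R] {φ : ι → Type*}
    [∀ i, AddCommMonoid (φ i)] [∀ i, Module R (φ i)] (f : ∀ i, φ i →ₗ[R] φ i)
    (k : ℕ) :
    LinearMap.piMap f ^ k = LinearMap.piMap fun i => f i ^ k := by
  induction k with
  | zero => ext; simp
  | succ k ih => ext; simp [pow_succ', ih]

universe u in
theorem Module.exists_linearEquiv_pi_quotient_span_pow {R : Type u} {M : Type*} [CommRing R]
    [IsDomain R] [IsPrincipalIdealRing R] [AddCommGroup M] [Module R M] [Module.Finite R M] {q : R}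
    (hq : Prime q) {r : ℕ} (hr : q ^ r ∈ Module.annihilator R M) :
    ∃ (ι : Type u) (_ : Fintype ι) (e : ι → ℕ),
      Nonempty (M ≃ₗ[R] ∀ i, R ⧸ Ideal.span {q ^ e i}) := by
  have htors : Module.IsTorsion R M := fun x =>
    ⟨⟨q ^ r, mem_nonZeroDivisors_of_ne_zero (pow_ne_zero r hq.ne_zero)⟩,
      Module.mem_annihilator.1 hr x⟩
  obtain ⟨ι, _, p, -, e, ⟨σ⟩⟩ := Module.equiv_directSum_of_isTorsion htors
  have hdvd (i : ι) : p i ^ e i ∣ q ^ r := by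
    simp_rw [σ.annihilator_eq, DirectSum, Module.annihilator_dfinsupp, Submodule.mem_iInf] at hr
    simpa [Ideal.annihilator_quotient, Ideal.mem_span_singleton] using hr i
  choose j _ hj using fun i => (dvd_prime_pow hq r).1 (hdvd i)
  exact ⟨ι, inferInstance, j, ⟨σ ≪≫ₗ DirectSum.linearEquivFunOnFintype R ι _ ≪≫ₗ
    LinearEquiv.piCongrRight fun i =>
      Submodule.quotEquivOfEq _ _ (Ideal.span_singleton_eq_span_singleton.2 (hj i))⟩⟩

namespace IsWeightFiltration

section Basic

variable {F V : Type*} [Field F] [AddCommGroup V] [Module F V] {N : V →ₗ[F] V}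
  {W W' : ℤ → Submodule F V}

theorem pow_mem_of_map_mem (hstep : ∀ n : ℤ, ∀ x ∈ W n, N x ∈ W (n - 2)) (d : ℕ)
    {n : ℤ} {x : V} (hx : x ∈ W n) : (N ^ d) x ∈ W (n - 2 * d) := by
  induction d generalizing n x with
  | zero => simpa using hx
  | succ d ih =>
    rw [pow_succ, Module.End.mul_apply]
    convert ih (hstep n x hx) using 2
    push_cast
    ring

theorem mk' (hmono : Monotone W) (hbdd : ∃ m : ℤ, W (-(m + 1)) = ⊥ ∧ W m = ⊤)
    (hstep : ∀ n : ℤ, ∀ x ∈ W n, N x ∈ W (n - 2))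
    (hsurj : ∀ k : ℕ, ∀ y ∈ W (-k), ∃ x ∈ W k, (N ^ k) x - y ∈ W (-k - 1))
    (hinj : ∀ k : ℕ, ∀ x ∈ W k, (N ^ k) x ∈ W (-k - 1) → x ∈ W (k - 1)) :
    IsWeightFiltration N W := by
  refine ⟨hmono, hbdd, hstep, fun k hk => ?_⟩
  lift k to ℕ using hk
  simp only [Int.toNat_natCast]
  refine ⟨fun x hx => ?_, hsurj k, hinj k⟩
  convert pow_mem_of_map_mem hstep k hx using 2
  ring

theorem pow_mem (h : IsWeightFiltration N W) (d : ℕ) {n : ℤ} {x : V} (hx : x ∈ W n) :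
    (N ^ d) x ∈ W (n - 2 * d) :=
  pow_mem_of_map_mem h.2.2.1 d hx

theorem exists_pow_sub_mem (h : IsWeightFiltration N W) (k : ℕ) {y : V} (hy : y ∈ W (-k)) :
    ∃ x ∈ W k, (N ^ k) x - y ∈ W (-k - 1) := by
  simpa using (h.2.2.2 k k.cast_nonneg).2.1 y hy

theorem mem_of_pow_mem (h : IsWeightFiltration N W) (k : ℕ) {x : V} (hx : x ∈ W k)
    (hNx : (N ^ k) x ∈ W (-k - 1)) : x ∈ W (k - 1) :=
  (h.2.2.2 k k.cast_nonneg).2.2 x hx (by simpa using hNx)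

theorem exists_eq_bot_eq_top (h : IsWeightFiltration N W) :
    ∃ m : ℕ, (∀ n : ℤ, n < -m → W n = ⊥) ∧ ∀ n : ℤ, m ≤ n → W n = ⊤ := by
  obtain ⟨m, hbot, htop⟩ := h.2.1
  refine ⟨m.toNat, fun n hn => eq_bot_iff.2 ?_, fun n hn => eq_top_iff.2 ?_⟩
  · exact hbot ▸ h.1 (by omega)
  · exact htop ▸ h.1 (by omega)

theorem map_pow_eq (h : IsWeightFiltration N W) (k : ℕ) : (W k).map (N ^ k) = W (-k) := by
  refine le_antisymm (Submodule.map_le_iff_le_comap.2 fun x hx => ?_) ?_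
  · show (N ^ k) x ∈ W (-k)
    convert h.pow_mem k hx using 2
    ring
  obtain ⟨m, hbot, -⟩ := h.exists_eq_bot_eq_top
  suffices ∀ j k : ℕ, m < k + j → W (-k) ≤ (W k).map (N ^ k) from this (m + 1) k (by omega)
  intro j
  induction j with
  | zero => intro k hk; simp [hbot (-k) (by omega)]
  | succ j ih =>
    intro k hk y hy
    obtain ⟨x, hx, hxy⟩ := h.exists_pow_sub_mem k hy
    rw [show -(k : ℤ) - 1 = -(k + 1 : ℕ) by push_cast; ring] at hxy
    obtain ⟨z, hz, hzxy⟩ := ih (k + 1) (by omega) hxy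
    refine ⟨x - N z, W k |>.sub_mem hx (h.1 (by omega) (h.2.2.1 _ z hz)), ?_⟩
    rw [map_sub, ← Module.End.mul_apply, ← pow_succ, hzxy, sub_sub_cancel]

theorem eq_comap_pow (h : IsWeightFiltration N W) (k : ℕ) :
    W k = (W (-(k + 2 : ℕ))).comap (N ^ (k + 1)) := by
  refine le_antisymm (fun x hx => ?_) fun x hx => ?_
  · show (N ^ (k + 1)) x ∈ W (-(k + 2 : ℕ))
    convert h.pow_mem (k + 1) hx using 2
    push_cast
    ring
  obtain ⟨m, -, htop⟩ := h.exists_eq_bot_eq_top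
  suffices ∀ j : ℕ, x ∈ W (k + j) → x ∈ W k from
    this m (by rw [htop _ (by omega)]; trivial)
  intro j hj
  induction j with
  | zero => simpa using hj
  | succ j ih =>
    refine ih ?_
    have hpow : (N ^ (k + j + 1)) x ∈ W (-(k + j + 1 : ℕ) - 1) := by
      rw [add_comm k, add_assoc, pow_add, Module.End.mul_apply]
      exact h.1 (by push_cast; omega) (h.pow_mem j hx)
    simpa using h.mem_of_pow_mem (k + j + 1) (by simpa [add_assoc] using hj) hpow

theorem eq_comap_map_pow (h : IsWeightFiltration N W) (k : ℕ) :
    W k = ((W (k + 2 : ℕ)).map (N ^ (k + 2))).comap (N ^ (k + 1)) := by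
  rw [h.map_pow_eq, ← h.eq_comap_pow]

theorem unique (h : IsWeightFiltration N W) (h' : IsWeightFiltration N W') : W = W' := by
  obtain ⟨m, -, htop⟩ := h.exists_eq_bot_eq_top
  obtain ⟨m', -, htop'⟩ := h'.exists_eq_bot_eq_top
  have hnat : ∀ j k : ℕ, max m m' ≤ k + j → W k = W' k := by
    intro j
    induction j with
    | zero => intro k hk; rw [htop k (by omega), htop' k (by omega)]
    | succ j ih =>
      intro k hk
      rw [h.eq_comap_map_pow, h'.eq_comap_map_pow, ih (k + 2) (by omega)]
  funext n
  obtain ⟨k, rfl | rfl⟩ := Int.eq_nat_or_neg n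
  · exact hnat (max m m') k (by omega)
  · rw [← h.map_pow_eq, ← h'.map_pow_eq, hnat (max m m') k (by omega)]

end Basic

section Transport

variable {F V V' : Type*} [Field F] [AddCommGroup V] [Module F V] [AddCommGroup V']
  [Module F V'] {N : V →ₗ[F] V} {N' : V' →ₗ[F] V'} {W' : ℤ → Submodule F V'}

theorem comap_linearEquiv (h : IsWeightFiltration N' W') (σ : V ≃ₗ[F] V')
    (hσ : N' ∘ₗ σ.toLinearMap = σ.toLinearMap ∘ₗ N) :
    IsWeightFiltration N fun n => (W' n).comap σ.toLinearMap := by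
  have hpow (k : ℕ) (x : V) : (N' ^ k) (σ x) = σ ((N ^ k) x) :=
    LinearMap.congr_fun (Module.End.commute_pow_left_of_commute hσ k) x
  refine mk' (fun a b hab => Submodule.comap_mono (h.1 hab)) ?_ ?_ ?_ ?_
  · obtain ⟨m, hbot, htop⟩ := h.2.1
    refine ⟨m, ?_, ?_⟩
    · rw [hbot, Submodule.comap_bot, LinearEquiv.ker]
    · rw [htop, Submodule.comap_top]
  · intro n x hx
    have hN : N' (σ x) = σ (N x) := LinearMap.congr_fun hσ x
    simpa [hN] using h.2.2.1 n _ hx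
  · intro k y hy
    obtain ⟨x', hx', hxy⟩ := h.exists_pow_sub_mem k hy
    refine ⟨σ.symm x', by simpa using hx', ?_⟩
    simpa [Submodule.mem_comap, ← hpow] using hxy
  · intro k x hx hNx
    exact h.mem_of_pow_mem k hx (by simpa [← hpow] using hNx)

end Transport

theorem pi {F ι : Type*} [Field F] [Finite ι] {V : ι → Type*}
    [∀ i, AddCommGroup (V i)] [∀ i, Module F (V i)] {N : ∀ i, V i →ₗ[F] V i}
    {W : ∀ i, ℤ → Submodule F (V i)} (h : ∀ i, IsWeightFiltration (N i) (W i)) :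
    IsWeightFiltration (LinearMap.piMap N) fun n => Submodule.pi Set.univ fun i => W i n := by
  choose m hbot htop using fun i => (h i).exists_eq_bot_eq_top
  obtain ⟨M, hM⟩ := (Set.finite_range m).bddAbove
  have hmM (i : ι) : (m i : ℤ) ≤ M := by exact_mod_cast hM ⟨i, rfl⟩
  refine mk' (fun a b hab x hx i _ => (h i).1 hab (hx i trivial)) ⟨M, ?_, ?_⟩
    (fun n x hx i _ => (h i).2.2.1 n _ (hx i trivial)) (fun k y hy => ?_)
    (fun k x hx hNx i _ => (h i).mem_of_pow_mem k (hx i trivial) ?_)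
  · refine eq_bot_iff.2 fun x hx => (Submodule.mem_bot F).2 (funext fun i => ?_)
    have hxi : x i ∈ W i (-(M + 1)) := hx i trivial
    rwa [hbot i _ (by linarith [hmM i]), Submodule.mem_bot] at hxi
  · refine eq_top_iff.2 fun x _ i _ => ?_
    simp [htop i _ (hmM i)]
  · choose x hx hxy using fun i => (h i).exists_pow_sub_mem k (hy i trivial)
    exact ⟨x, fun i _ => hx i, fun i _ => by simpa [LinearMap.piMap_pow] using hxy i⟩
  · simpa [LinearMap.piMap_pow] using hNx i trivial

end IsWeightFiltration

open LinearMap in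
theorem isWeightFiltration_range_pow {F V : Type*} [Field F] [AddCommGroup V] [Module F V]
    {N : V →ₗ[F] V} {e : ℕ} (hN : N ^ e = 0)
    (hker : ∀ s, ker (N ^ s) ≤ range (N ^ (e - s))) :
    IsWeightFiltration N fun n => range (N ^ (((e : ℤ) - n).toNat / 2)) := by
  have hle {a b : ℕ} (h : b ≤ a) := range_pow_le_range_pow N h
  have hzero {a : ℕ} (ha : e ≤ a) : N ^ a = 0 := pow_eq_zero_of_le ha hN
  refine .mk' (fun a b hab => hle (by omega)) ⟨e, ?_, ?_⟩ ?_ ?_ ?_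
  · rw [hzero (by omega), range_zero]
  · rw [show ((e : ℤ) - e).toNat / 2 = 0 by omega, pow_zero, Module.End.one_eq_id, range_id]
  · rintro n _ ⟨y, rfl⟩
    refine hle (a := ((e : ℤ) - n).toNat / 2 + 1) (by omega) ⟨y, ?_⟩
    rw [pow_succ', Module.End.mul_apply]
  · rintro k _ ⟨z, rfl⟩
    set b := ((e : ℤ) - k).toNat / 2
    have hsplit : N ^ (((e : ℤ) - -(k : ℤ)).toNat / 2) = N ^ k * N ^ b := by
      rw [← pow_add]
      by_cases hk : k ≤ e
      · congr 1
        omega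
      · rw [hzero (by omega), hzero (by omega)]
    refine ⟨(N ^ b) z, ⟨z, rfl⟩, ?_⟩
    rw [hsplit, Module.End.mul_apply, sub_self]
    exact zero_mem _
  · rintro k _ ⟨w, rfl⟩ ⟨u, hu⟩
    set b := ((e : ℤ) - k).toNat / 2
    by_cases hb : ((e : ℤ) - (k - 1)).toNat / 2 ≤ b
    · exact hle hb ⟨w, rfl⟩
    -- Here `e - k = 2 b + 1`; `hker` gives `w - N u ∈ range (N ^ (b + 1))`, so `w ∈ range N`.
    rw [show ((e : ℤ) - (-k - 1)).toNat / 2 = k + b + 1 by omega] at hu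
    rw [show ((e : ℤ) - (k - 1)).toNat / 2 = b + 1 by omega]
    have hw : w - N u ∈ ker (N ^ (k + b)) := by
      rw [mem_ker, map_sub, ← Module.End.mul_apply, ← pow_succ, hu, ← Module.End.mul_apply,
        ← pow_add, sub_self]
    obtain ⟨v, hv⟩ := hle (a := e - (k + b)) (b := 1) (by omega) (hker _ hw)
    refine ⟨u + v, ?_⟩
    rw [pow_one] at hv
    rw [pow_succ, Module.End.mul_apply, map_add, hv, add_sub_cancel]

open Submodule.Quotient in
theorem exists_isWeightFiltration_lsmul_quotient_span_pow {F A : Type*} [Field F] [CommRing A]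
    [IsDomain A] [Algebra F A] {q : A} (hq : q ≠ 0) (e : ℕ) :
    ∃ W, IsWeightFiltration (Algebra.lsmul F F (A ⧸ Ideal.span {q ^ e}) q) W := by
  set N := Algebra.lsmul F F (A ⧸ Ideal.span {q ^ e}) q
  have hpow (s : ℕ) (a : A) : (N ^ s) (mk a) = mk (q ^ s * a) := by
    rw [← map_pow, Algebra.lsmul_apply, ← mk_smul, smul_eq_mul]
  refine ⟨_, isWeightFiltration_range_pow (e := e) (LinearMap.ext fun x => ?_) fun s x hx => ?_⟩
  · obtain ⟨a, rfl⟩ := mk_surjective _ x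
    rw [hpow, LinearMap.zero_apply, mk_eq_zero, Ideal.mem_span_singleton]
    exact dvd_mul_right _ _
  obtain ⟨a, rfl⟩ := mk_surjective _ x
  rcases le_or_gt s e with hs | hs
  · rw [LinearMap.mem_ker, hpow, mk_eq_zero, Ideal.mem_span_singleton,
      ← pow_sub_mul_pow q hs, mul_comm, mul_dvd_mul_iff_left (pow_ne_zero s hq)] at hx
    obtain ⟨c, rfl⟩ := hx
    exact ⟨mk c, hpow _ c⟩
  · rw [Nat.sub_eq_zero_of_le hs.le, pow_zero, Module.End.one_eq_id, LinearMap.range_id]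
    trivial

open Polynomial in
theorem exists_isWeightFiltration {F V : Type*} [Field F] [AddCommGroup V] [Module F V]
    [FiniteDimensional F V] {N : V →ₗ[F] V} (hN : IsNilpotent N) :
    ∃ W, IsWeightFiltration N W := by
  obtain ⟨r, hr⟩ := hN
  have hann : (X : F[X]) ^ r ∈ Module.annihilator F[X] (Module.AEval' N) :=
    Module.mem_annihilator.2 fun m => by
      rw [← (Module.AEval'.of N).apply_symm_apply m, Module.AEval'.X_pow_smul_of, hr, zero_smul,
        map_zero]
  obtain ⟨ι, _, e, ⟨τ⟩⟩ := Module.exists_linearEquiv_pi_quotient_span_pow prime_X hann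
  choose W hW using fun i =>
    exists_isWeightFiltration_lsmul_quotient_span_pow (F := F) (X_ne_zero (R := F)) (e i)
  let σ : V ≃ₗ[F] ∀ i, F[X] ⧸ Ideal.span {(X : F[X]) ^ e i} :=
    (Module.AEval'.of N).trans (τ.restrictScalars F)
  refine ⟨_, (IsWeightFiltration.pi hW).comap_linearEquiv σ (LinearMap.ext fun x => ?_)⟩
  simp only [LinearMap.comp_apply, LinearEquiv.coe_coe, σ, LinearEquiv.trans_apply]
  rw [← Module.AEval'.X_smul_of]
  exact (τ.map_smul X _).symm

theorem weight_filtration_exists_unique_general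
    {F V : Type*} [Field F] [AddCommGroup V] [Module F V]
    [FiniteDimensional F V] (N : V →ₗ[F] V) (hN : ∃ r : ℕ, N ^ r = 0) :
    ∃! W : ℤ → Submodule F V, IsWeightFiltration N W := by
  obtain ⟨W, hW⟩ := exists_isWeightFiltration hN
  exact ⟨W, hW, fun W' hW' => hW'.unique hW⟩

/-- **Existence and uniqueness of the weight filtration of a nilpotent endomorphism.**
If `N` is a nilpotent endomorphism of a finite-dimensional vector space `V` over a field
of characteristic zero, then there is a unique increasing filtration `W(N)_•` of `V`,
bounded below by `⊥` and above by `⊤`, such that `N · W(N)_n ⊆ W(N)_{n-2}` for all `n`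
and for each `k ≥ 0` the map induced by `N^k` from `Gr_k V` to `Gr_{-k} V` is an
isomorphism. -/
theorem weight_filtration_exists_unique
    {F V : Type*} [Field F] [CharZero F] [AddCommGroup V] [Module F V]
    [FiniteDimensional F V] (N : V →ₗ[F] V) (hN : ∃ r : ℕ, N ^ r = 0) :
    ∃! W : ℤ → Submodule F V, IsWeightFiltration N W :=
  weight_filtration_exists_unique_general N hN
end

section
/- Let L(A,T) be the free Lie algebra over ℚ on A, T, with θ = [T,A], and let D^1 L(A,T) denote the kernel of the Lie algebra homomorphism L(A,T) → L(A,T)/(ideal generated by θ) ≅ the free abelianization-type quotient; equivalently D^1 is the ideal generated by θ. If δ is a derivation of L(A,T) with δ(θ) = 0 and δ(A), δ(T) ∈ D^d L(A,T) where D^d := L^d(D^1) is the d-th lower central series term of D^1, then δ maps D^1 L(A,T) into D^{d+1} L(A,T). -/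
/-!
Elements `x` with `δ x ∈ I` form a Lie subalgebra whenever `I` is an ideal, so `δ(A), δ(T) ∈ D^d`
gives `δ(L) ⊆ D^d`. Then the Leibniz rule `δ⁅y, m⁆ = ⁅y, δ m⁆ + ⁅δ y, m⁆`, with `m ∈ D^1` and
`δ y ∈ D^d`, shows that the elements of `D^1` sent into `⁅D^1, D^d⁆ = D^(d+1)` form an ideal; it
contains `θ` because `δ θ = 0`, hence it is all of `D^1`.
-/

open FreeLieAlgebra

namespace Stmt4

abbrev L := FreeLieAlgebra ℚ (Fin 2)

noncomputable def A : L := of ℚ 0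
noncomputable def T : L := of ℚ 1

/-- `θ = [T, A]`. -/
noncomputable def θ : L := ⁅T, A⁆

/-- `D^1 L(A,T)`: the (Lie) ideal of `L(A,T)` generated by `θ`. -/
noncomputable def D1 : LieIdeal ℚ L := LieSubmodule.lieSpan ℚ L {θ}

/-- `Dser d` is `D^(d+1) = L^(d+1)(D^1)`, the `(d+1)`-st term of the lower central
series of the ideal `D^1` (computed inside `L(A,T)`):
`Dser 0 = D^1` and `Dser (k+1) = [D^1, Dser k]`. -/
noncomputable def Dser : ℕ → LieIdeal ℚ L
  | 0 => D1
  | k + 1 => ⁅D1, Dser k⁆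

end Stmt4

open Stmt4

namespace FreeLieAlgebra

variable (R X : Type*) [CommRing R]

theorem lieSpan_range_of :
    LieSubalgebra.lieSpan R (FreeLieAlgebra R X) (Set.range (of R (X := X))) = ⊤ := by
  set S := LieSubalgebra.lieSpan R (FreeLieAlgebra R X) (Set.range (of R))
  let F : FreeLieAlgebra R X →ₗ⁅R⁆ S :=
    lift R fun i => ⟨of R i, LieSubalgebra.subset_lieSpan ⟨i, rfl⟩⟩
  have hF : S.incl.comp F = LieHom.id (R := R) := hom_ext fun i => by simp [F]
  refine eq_top_iff.2 fun x _ => ?_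
  have hx : (F x : FreeLieAlgebra R X) = x := LieHom.congr_fun hF x
  exact hx ▸ (F x).2

end FreeLieAlgebra

namespace LieDerivation

variable {R L : Type*} [CommRing R] [LieRing L] [LieAlgebra R L]

theorem apply_mem_of_mem_lieSpan (D : LieDerivation R L L) {I : LieIdeal R L} {s : Set L}
    (hs : ∀ y ∈ s, D y ∈ I) {x : L} (hx : x ∈ LieSubalgebra.lieSpan R L s) : D x ∈ I := by
  induction hx using LieSubalgebra.lieSpan_induction with
  | mem y hy => exact hs y hy
  | zero => simp
  | add y z _ _ hy hz => simpa using add_mem hy hz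
  | smul a y _ hy => simpa using I.smul_mem a hy
  | lie y z _ _ hy hz =>
    rw [apply_lie_eq_sub]
    exact sub_mem (I.lie_mem hz) (I.lie_mem hy)

theorem apply_mem_of_forall_apply_of_mem {X : Type*} (D : LieDerivation R (FreeLieAlgebra R X)
    (FreeLieAlgebra R X)) {I : LieIdeal R (FreeLieAlgebra R X)} (h : ∀ i, D (of R i) ∈ I)
    (x : FreeLieAlgebra R X) : D x ∈ I :=
  D.apply_mem_of_mem_lieSpan (s := Set.range (of R)) (by rintro _ ⟨i, rfl⟩; exact h i)
    (lieSpan_range_of R X ▸ LieSubalgebra.mem_top x)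

theorem apply_mem_lie_lieSpan (D : LieDerivation R L L) {I : LieIdeal R L} {s : Set L}
    (hD : ∀ y, D y ∈ I) (hs : ∀ y ∈ s, D y ∈ ⁅LieSubmodule.lieSpan R L s, I⁆) {x : L}
    (hx : x ∈ LieSubmodule.lieSpan R L s) : D x ∈ ⁅LieSubmodule.lieSpan R L s, I⁆ := by
  induction hx using LieSubmodule.lieSpan_induction with
  | mem y hy => exact hs y hy
  | zero => simp
  | add y z _ _ hy hz => simpa using add_mem hy hz
  | smul a y _ hy => simpa using SMulMemClass.smul_mem a hy
  | lie y z hz hDz =>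
    rw [apply_lie_eq_add]
    refine add_mem (LieSubmodule.lie_mem _ hDz) ?_
    rw [LieSubmodule.lie_comm]
    exact LieSubmodule.lie_mem_lie (hD y) hz

end LieDerivation

theorem derivation_raises_theta_depth_general (d : ℕ)
    (δ : LieDerivation ℚ L L) (hθ : δ θ = 0)
    (hA : δ A ∈ Dser (d - 1)) (hT : δ T ∈ Dser (d - 1)) :
    ∀ x ∈ D1, δ x ∈ Dser d := by
  have hall : ∀ x, δ x ∈ Dser (d - 1) :=
    δ.apply_mem_of_forall_apply_of_mem (Fin.forall_fin_two.2 ⟨hA, hT⟩)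
  cases d with
  | zero => exact fun x _ => hall x
  | succ k =>
    intro x hx
    refine δ.apply_mem_lie_lieSpan (s := {θ}) hall ?_ hx
    rintro _ rfl
    rw [hθ]
    exact zero_mem _

/-- If `δ` is a derivation of the free Lie algebra `L(A,T)` over `ℚ` with `δ(θ) = 0`
(where `θ = [T,A]`) and `δ(A), δ(T) ∈ D^d L(A,T)` (the `d`-th lower central series
term of the ideal `D^1` generated by `θ`), then `δ` maps `D^1 L(A,T)` into
`D^(d+1) L(A,T)`.  (Here `Dser (d-1) = D^d` and `Dser d = D^(d+1)`.) -/
theorem derivation_raises_theta_depth (d : ℕ) (hd : 1 ≤ d)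
    (δ : LieDerivation ℚ L L) (hθ : δ θ = 0)
    (hA : δ A ∈ Dser (d - 1)) (hT : δ T ∈ Dser (d - 1)) :
    ∀ x ∈ D1, δ x ∈ Dser d :=
  derivation_raises_theta_depth_general d δ hθ hA hT
end

section
/- Let V be a vector space with two decreasing/increasing filtrations F^• and G^•, and define their convolution (F∗G)^n V := Σ_{j+k=n} F^j V ∩ G^k V. Then for each n there is a natural isomorphism Gr^n_{F∗G} V ≅ ⊕_{j+k=n} Gr^j_F Gr^k_G V, provided V is a finite-dimensional vector space over a field and the filtrations are exhaustive and separated. -/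
/-! Both sides are finite-dimensional, so it suffices to compare dimensions. Adding the summands
of `(F∗G)^d = Σ_j F^j ∩ G^{d-j}` one at a time, from the top of `F` down, the summand `F^j ∩ G^{d-j}`
contributes `dim Gr^j_F G^{d-j}`, because the tail `Σ_{i>j} F^i ∩ G^{d-i}` lies in `F^{j+1}` and
contains `F^{j+1} ∩ G^{d-j}`. Hence `dim (F∗G)^d = Σ_j dim Gr^j_F G^{d-j}`, and the difference of
these formulas for `d = n` and `d = n + 1` is
`Σ_j (dim Gr^j_F G^{n-j} - dim Gr^j_F G^{n-j+1}) = Σ_j dim Gr^j_F Gr^{n-j}_G`. -/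

open DirectSum

section

variable {K V : Type*} [Field K] [AddCommGroup V] [Module K V]

/-- For submodules `p q` of `V`, the "graded piece" `p / (p ∩ q)`, i.e. the image of
`p` in `V/q`. -/
abbrev GrPair (p q : Submodule K V) : Type _ := p ⧸ (q.comap p.subtype)

/-- The convolution `(F∗G)^n V = Σ_{j+k=n} F^j V ∩ G^k V` of two filtrations. -/
def convFil (F G : ℤ → Submodule K V) (n : ℤ) : Submodule K V :=
  ⨆ j : ℤ, F j ⊓ G (n - j)

noncomputable def DirectSum.linearEquivPiOfSubsingleton {R ι : Type*} [Semiring R]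
    [DecidableEq ι] (M : ι → Type*) [∀ i, AddCommMonoid (M i)] [∀ i, Module R (M i)]
    (s : Finset ι) (hs : ∀ i ∉ s, Subsingleton (M i)) :
    (⨁ i, M i) ≃ₗ[R] ∀ i : s, M i :=
  LinearEquiv.ofBijective (LinearMap.pi fun i : s => component R ι M i)
    ⟨fun _ _ hxy => ext_component R fun i =>
      if hi : i ∈ s then congr_fun hxy ⟨i, hi⟩ else (hs i hi).elim _ _,
     fun f => ⟨mk M s f, funext fun i => mk_apply_of_mem i.2⟩⟩

theorem subsingleton_grPair_of_le {p q : Submodule K V} (h : p ≤ q) :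
    Subsingleton (GrPair p q) := by
  rw [Submodule.Quotient.subsingleton_iff, Submodule.comap_subtype_eq_top]
  exact h

theorem finrank_grPair_add_finrank_inf [FiniteDimensional K V] (p q : Submodule K V) :
    Module.finrank K (GrPair p q) + Module.finrank K ↥(p ⊓ q) = Module.finrank K p := by
  rw [← Submodule.finrank_quotient_add_finrank (q.comap p.subtype)]
  congr 1
  exact (Submodule.comapSubtypeEquivOfLe inf_le_left).finrank_eq.symm.trans
    (by rw [Submodule.comap_inf, Submodule.comap_subtype_self, top_inf_eq])

theorem finrank_sup_eq_finrank_grPair_add [FiniteDimensional K V] {X T A : Submodule K V}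
    (hTA : T ≤ A) (hXA : X ⊓ A ≤ T) :
    Module.finrank K ↥(X ⊔ T) = Module.finrank K (GrPair X A) + Module.finrank K T := by
  have hinf : X ⊓ T = X ⊓ A := le_antisymm (inf_le_inf_left X hTA) (le_inf inf_le_left hXA)
  have := Submodule.finrank_sup_add_finrank_inf_eq X T
  rw [hinf, ← finrank_grPair_add_finrank_inf X A] at this
  omega

theorem finrank_grPair_inf_add_finrank_grPair_sup [FiniteDimensional K V]
    {A A' B B' : Submodule K V} (hA : A' ≤ A) (hB : B' ≤ B) :
    Module.finrank K (GrPair (A ⊓ B') A') +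
        Module.finrank K (GrPair (A ⊓ B) ((A' ⊓ B) ⊔ (A ⊓ B'))) =
      Module.finrank K (GrPair (A ⊓ B) A') := by
  have hsup : (A' ⊓ B) ⊔ (A ⊓ B') ≤ A ⊓ B :=
    sup_le (inf_le_inf_right B hA) (inf_le_inf_left A hB)
  have hA'B : A ⊓ B ⊓ A' = A' ⊓ B := by rw [inf_right_comm, inf_eq_right.2 hA]
  have hA'B' : A ⊓ B' ⊓ A' = A' ⊓ B' := by rw [inf_right_comm, inf_eq_right.2 hA]
  have hmeet : (A' ⊓ B) ⊓ (A ⊓ B') = A' ⊓ B' := by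
    rw [inf_inf_inf_comm, inf_eq_left.2 hA, inf_eq_right.2 hB]
  have h1 := finrank_grPair_add_finrank_inf (A ⊓ B') A'
  have h2 := finrank_grPair_add_finrank_inf (A ⊓ B) ((A' ⊓ B) ⊔ (A ⊓ B'))
  have h3 := finrank_grPair_add_finrank_inf (A ⊓ B) A'
  have h4 := Submodule.finrank_sup_add_finrank_inf_eq (A' ⊓ B) (A ⊓ B')
  rw [hA'B'] at h1
  rw [inf_eq_right.2 hsup] at h2
  rw [hA'B] at h3
  rw [hmeet] at h4
  omega

theorem convFil_antitone {F G : ℤ → Submodule K V} (hG : Antitone G) : Antitone (convFil F G) :=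
  fun _ _ hmn => iSup_mono fun j => inf_le_inf_left (F j) (hG (by omega))

def tailConv (F G : ℤ → Submodule K V) (d m : ℤ) : Submodule K V :=
  ⨆ (j) (_ : m ≤ j), F j ⊓ G (d - j)

section tailConv

variable {F G : ℤ → Submodule K V} {d m : ℤ}

theorem tailConv_eq_sup : tailConv F G d m = (F m ⊓ G (d - m)) ⊔ tailConv F G d (m + 1) := by
  refine le_antisymm (iSup₂_le fun j hj => ?_) (sup_le (le_iSup₂_of_le m le_rfl le_rfl) ?_)
  · rcases hj.eq_or_lt with rfl | hj
    · exact le_sup_left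
    · exact le_sup_of_le_right (le_iSup₂_of_le j (Int.add_one_le_of_lt hj) le_rfl)
  · exact iSup₂_le fun j hj => le_iSup₂_of_le j (by omega) le_rfl

theorem tailConv_le (hF : Antitone F) : tailConv F G d m ≤ F m :=
  iSup₂_le fun _ hj => inf_le_left.trans (hF hj)

theorem tailConv_eq_bot (hF : Antitone F) (hm : F m = ⊥) : tailConv F G d m = ⊥ :=
  eq_bot_iff.2 (hm ▸ tailConv_le hF)

theorem convFil_eq_tailConv (hG : Antitone G) (hm : G (d - m + 1) = ⊥) :
    convFil F G d = tailConv F G d m := by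
  refine le_antisymm (iSup_le fun j => ?_) (iSup₂_le fun j _ => le_iSup_of_le j le_rfl)
  by_cases hj : m ≤ j
  · exact le_iSup₂_of_le j hj le_rfl
  · exact (inf_le_right.trans (hG (by omega))).trans (hm.le.trans bot_le)

theorem finrank_tailConv [FiniteDimensional K V] (hF : Antitone F) (hG : Antitone G) :
    Module.finrank K (tailConv F G d m) =
      Module.finrank K (GrPair (F m ⊓ G (d - m)) (F (m + 1))) +
        Module.finrank K (tailConv F G d (m + 1)) := by
  rw [tailConv_eq_sup]
  refine finrank_sup_eq_finrank_grPair_add (tailConv_le hF) ?_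
  calc F m ⊓ G (d - m) ⊓ F (m + 1) ≤ F (m + 1) ⊓ G (d - (m + 1)) :=
        le_inf inf_le_right (inf_le_left.trans (inf_le_right.trans (hG (by omega))))
    _ ≤ tailConv F G d (m + 1) := le_iSup₂_of_le (m + 1) le_rfl le_rfl

theorem finrank_tailConv_eq_sum [FiniteDimensional K V] (hF : Antitone F) (hG : Antitone G)
    {M : ℤ} (hM : F M = ⊥) (hmM : m ≤ M) :
    Module.finrank K (tailConv F G d m) =
      ∑ j ∈ Finset.Ico m M, Module.finrank K (GrPair (F j ⊓ G (d - j)) (F (j + 1))) := by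
  induction m, hmM using Int.leInductionDown with
  | base => simp [tailConv_eq_bot hF hM]
  | pred m hmM ih =>
    rw [← Finset.insert_Ico_left_eq_Ico_sub_one hmM, Finset.sum_insert (by simp), ← ih,
      finrank_tailConv hF hG, sub_add_cancel]

end tailConv

section convFil

variable {F G : ℤ → Submodule K V} {lo hi : ℤ}

theorem finrank_convFil_eq_sum [FiniteDimensional K V] (hF : Antitone F) (hG : Antitone G)
    {d : ℤ} (hlo : G (d - lo + 1) = ⊥) (hhi : F hi = ⊥) (hlohi : lo ≤ hi) :
    Module.finrank K (convFil F G d) =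
      ∑ j ∈ Finset.Ico lo hi, Module.finrank K (GrPair (F j ⊓ G (d - j)) (F (j + 1))) := by
  rw [convFil_eq_tailConv hG hlo, finrank_tailConv_eq_sum hF hG hhi hlohi]

theorem finrank_grPair_convFil [FiniteDimensional K V] (hF : Antitone F) (hG : Antitone G)
    {n : ℤ} (hlo : G (n - lo + 1) = ⊥) (hhi : F hi = ⊥) (hlohi : lo ≤ hi) :
    Module.finrank K (GrPair (convFil F G n) (convFil F G (n + 1))) =
      ∑ j ∈ Finset.Ico lo hi, Module.finrank K (GrPair (F j ⊓ G (n - j))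
        ((F (j + 1) ⊓ G (n - j)) ⊔ (F j ⊓ G (n - j + 1)))) := by
  have hlo' : G (n + 1 - lo + 1) = ⊥ := eq_bot_iff.2 (hlo ▸ hG (by omega))
  have hgr := finrank_grPair_add_finrank_inf (convFil F G n) (convFil F G (n + 1))
  rw [inf_eq_right.2 (convFil_antitone hG (by omega)), finrank_convFil_eq_sum hF hG hlo hhi hlohi,
    finrank_convFil_eq_sum hF hG hlo' hhi hlohi] at hgr
  have hterm : ∀ j, Module.finrank K (GrPair (F j ⊓ G (n - j)) (F (j + 1))) =
      Module.finrank K (GrPair (F j ⊓ G (n + 1 - j)) (F (j + 1))) +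
        Module.finrank K (GrPair (F j ⊓ G (n - j))
          ((F (j + 1) ⊓ G (n - j)) ⊔ (F j ⊓ G (n - j + 1)))) := fun j => by
    rw [show n + 1 - j = n - j + 1 by ring]
    exact (finrank_grPair_inf_add_finrank_grPair_sup (hF (by omega)) (hG (by omega))).symm
  rw [Finset.sum_congr rfl fun j _ => hterm j, Finset.sum_add_distrib] at hgr
  omega

end convFil

theorem convolution_graded_iso_general [FiniteDimensional K V]
    (F G : ℤ → Submodule K V) (hF : Antitone F) (hG : Antitone G)
    (hFbot : ∃ a : ℤ, F a = ⊥)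
    (hGbot : ∃ a : ℤ, G a = ⊥) (n : ℤ) :
    Nonempty (
      (GrPair (convFil F G n) (convFil F G (n + 1)))
      ≃ₗ[K]
      (⨁ j : ℤ, GrPair (F j ⊓ G (n - j))
        ((F (j + 1) ⊓ G (n - j)) ⊔ (F j ⊓ G (n - j + 1))))) := by
  obtain ⟨hi, hhi⟩ := hFbot
  obtain ⟨b, hb⟩ := hGbot
  set lo := min (n - b + 1) hi
  have hlo : G (n - lo + 1) = ⊥ := eq_bot_iff.2 (hb ▸ hG (by omega))
  have hsupport : ∀ j ∉ Finset.Ico lo hi, F j ⊓ G (n - j) = ⊥ := fun j hj => by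
    rcases le_or_gt hi j with h | h
    · exact eq_bot_iff.2 (inf_le_left.trans (hhi ▸ hF h))
    · exact eq_bot_iff.2 (inf_le_right.trans (hlo ▸ hG (by rw [Finset.mem_Ico] at hj; omega)))
  refine ⟨(LinearEquiv.ofFinrankEq _ _ ?_).trans (linearEquivPiOfSubsingleton _
    (Finset.Ico lo hi) fun j hj => subsingleton_grPair_of_le ((hsupport j hj).trans_le bot_le)).symm⟩
  rw [finrank_grPair_convFil hF hG hlo hhi (min_le_right _ _), Module.finrank_pi_fintype]
  exact (Finset.sum_coe_sort _ _).symm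

/-- **Graded pieces of the convolution of two filtrations.**
Let `V` be a finite-dimensional vector space over a field `K` with two decreasing,
exhaustive and separated filtrations `F^•` and `G^•`, and let
`(F∗G)^n V := Σ_{j+k=n} F^j V ∩ G^k V` be their convolution.  Then for each `n`
there is a (natural) isomorphism
`Gr^n_{F∗G} V ≅ ⊕_{j+k=n} Gr^j_F Gr^k_G V`,
where `Gr^n_{F∗G} V = (F∗G)^n V / (F∗G)^{n+1} V` and
`Gr^j_F Gr^k_G V = (F^j ∩ G^k) / (F^{j+1} ∩ G^k + F^j ∩ G^{k+1})`. -/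
theorem convolution_graded_iso [FiniteDimensional K V]
    (F G : ℤ → Submodule K V) (hF : Antitone F) (hG : Antitone G)
    (hFtop : ∃ a : ℤ, F a = ⊤) (hFbot : ∃ a : ℤ, F a = ⊥)
    (hGtop : ∃ a : ℤ, G a = ⊤) (hGbot : ∃ a : ℤ, G a = ⊥) (n : ℤ) :
    Nonempty (
      (GrPair (convFil F G n) (convFil F G (n + 1)))
      ≃ₗ[K]
      (⨁ j : ℤ, GrPair (F j ⊓ G (n - j))
        ((F (j + 1) ⊓ G (n - j)) ⊔ (F j ⊓ G (n - j + 1))))) :=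
  convolution_graded_iso_general F G hF hG hFbot hGbot n

end
end
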